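/- arXiv:1007.3528 — 2 statements merged into one kernel-verified Lean document; each statement's English description precedes it below -/
import Mathlib

section
/- Let G be a locally compact, σ-compact group and let w be an admissible weight on G. Then for every f ∈ W(L¹, L^∞_{1/w}) and g ∈ W(L^∞, L¹_w), the pointwise product f·g is integrable and ∫_G |f(x)||g(x)| dx ≤ C ‖f‖_{W(L¹,L^∞_{1/w})} ‖g‖_{W(L^∞,L¹_w)} for a constant C depending only on V and w. The same holds in the unweighted case: W(L¹,L^∞) · W(L^∞,L¹) ↪ L¹. -/
/-!
Choose an open `U ∋ 1` with `U⁻¹ * U ⊆ V` and, by σ-compactness, countably many translates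
`z • U` covering `G`. Every `x` lies in some `z • U`, so the set of `y` with `(y, x)` in
`S = ⋃ z, (z • U) ×ˢ (z • U)` has measure at least `μ U`, while `(y, x) ∈ S` forces `x ∈ y • V`.
Tonelli then gives
`μ U * ∫ |f g| ≤ ∫_y ∫_{y • V} |f g| ≤ ∫_y g^#(y) ∫_{y • V} |f| ≤ ‖f‖ * ∫_y g^#(y) w(y)`,
so `C = (μ U)⁻¹` works for both the weighted and (with `w` replaced by `1`) the unweighted case.
The set `S` stands in for `{(y, x) | y⁻¹ * x ∈ V}`, which need not be measurable for the product
σ-algebra when `G` is not second countable.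
-/

open MeasureTheory ENNReal Filter Set Pointwise

noncomputable section

namespace CoorbitCovers

variable {G : Type*}

/-- The group setting: a locally compact, σ-compact group `G` together with a left Haar
measure `μ`, its modular function `Δ`, and a fixed symmetric relatively compact
neighborhood `V` of the identity. -/
structure GroupSetting (G : Type*) [Group G] [TopologicalSpace G] [MeasurableSpace G] where
  μ : Measure G
  haar : μ.IsHaarMeasure
  Δ : G → ℝ
  Δ_pos : ∀ x, 0 < Δ x
  Δ_hom : ∀ x y, Δ (x * y) = Δ x * Δ y
  Δ_spec : ∀ (x : G) (s : Set G), MeasurableSet s →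
    μ ((fun y => y * x) '' s) = ENNReal.ofReal (Δ x) * μ s
  V : Set G
  V_meas : MeasurableSet V
  V_symm : V⁻¹ = V
  V_nhds : V ∈ nhds (1 : G)
  V_relCompact : IsCompact (closure V)

variable [Group G] [TopologicalSpace G] [IsTopologicalGroup G]
  [LocallyCompactSpace G] [SigmaCompactSpace G] [MeasurableSpace G] [BorelSpace G]

/-- `enn f x = ‖f x‖` as an extended nonnegative real. -/
def enn (f : G → ℂ) : G → ℝ≥0∞ := fun x => (‖f x‖₊ : ℝ≥0∞)

/-- Convolution of two extended-nonnegative functions: `f*g(x) = ∫ f(y) g(y⁻¹x) dy`. -/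
def convE (GS : GroupSetting G) (f g : G → ℝ≥0∞) : G → ℝ≥0∞ :=
  fun x => ∫⁻ y, f y * g (y⁻¹ * x) ∂GS.μ

/-- Convolution of two complex functions: `f*g(x) = ∫ f(y) g(y⁻¹x) dy`. -/
def convC (GS : GroupSetting G) (f g : G → ℂ) : G → ℂ :=
  fun x => ∫ y, f y * g (y⁻¹ * x) ∂GS.μ

/-- The `L²`-type pairing `⟨f,h⟩ = ∫ f(x) conj (h(x)) dx`. -/
def pairing (GS : GroupSetting G) (f h : G → ℂ) : ℂ :=
  ∫ x, f x * (starRingEnd ℂ) (h x) ∂GS.μ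

/-- The left local maximum function `f^#(x) = esssup_{y ∈ V} f(xy)`. -/
def sharpL (GS : GroupSetting G) (f : G → ℝ≥0∞) : G → ℝ≥0∞ :=
  fun x => essSup (fun y => f (x * y)) (GS.μ.restrict GS.V)

/-- The right local maximum function `f_#(x) = esssup_{y ∈ V} f(yx)`. -/
def sharpR (GS : GroupSetting G) (f : G → ℝ≥0∞) : G → ℝ≥0∞ :=
  fun x => essSup (fun y => f (y * x)) (GS.μ.restrict GS.V)

/-- The norm of `L¹_w`: `∫ f(x) w(x) dx`. -/
def L1wNorm (GS : GroupSetting G) (w : G → ℝ) (f : G → ℝ≥0∞) : ℝ≥0∞ :=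
  ∫⁻ x, f x * ENNReal.ofReal (w x) ∂GS.μ

/-- The norm of `L^∞`. -/
def LinfNorm (GS : GroupSetting G) (f : G → ℝ≥0∞) : ℝ≥0∞ := essSup f GS.μ

/-- The norm of `L^∞_{1/w}`: `esssup f(x)/w(x)`. -/
def LinfwInvNorm (GS : GroupSetting G) (w : G → ℝ) (f : G → ℝ≥0∞) : ℝ≥0∞ :=
  essSup (fun x => f x / ENNReal.ofReal (w x)) GS.μ

/-- The norm of the amalgam space `W(L^∞, L¹_w)`, namely `‖f^#‖_{L¹_w}`. -/
def W_Linf_L1w (GS : GroupSetting G) (w : G → ℝ) (f : G → ℝ≥0∞) : ℝ≥0∞ :=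
  L1wNorm GS w (sharpL GS f)

/-- The norm of the right amalgam space `W_R(L^∞, L¹_w)`, namely `‖f_#‖_{L¹_w}`. -/
def WR_Linf_L1w (GS : GroupSetting G) (w : G → ℝ) (f : G → ℝ≥0∞) : ℝ≥0∞ :=
  L1wNorm GS w (sharpR GS f)

/-- The norm of the unweighted amalgam space `W(L^∞, L¹)`. -/
def W_Linf_L1 (GS : GroupSetting G) (f : G → ℝ≥0∞) : ℝ≥0∞ := ∫⁻ x, sharpL GS f x ∂GS.μ

/-- The norm of the unweighted right amalgam space `W_R(L^∞, L¹)`. -/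
def WR_Linf_L1 (GS : GroupSetting G) (f : G → ℝ≥0∞) : ℝ≥0∞ := ∫⁻ x, sharpR GS f x ∂GS.μ

/-- The norm of `W(L¹, L^∞_{1/w})`: `esssup_x ‖f χ_{xV}‖_{L¹} / w(x)`. -/
def W_L1_Linfw (GS : GroupSetting G) (w : G → ℝ) (f : G → ℝ≥0∞) : ℝ≥0∞ :=
  essSup (fun x => (∫⁻ y in x • GS.V, f y ∂GS.μ) / ENNReal.ofReal (w x)) GS.μ

/-- The norm of the unweighted `W(L¹, L^∞)`. -/
def W_L1_Linf (GS : GroupSetting G) (f : G → ℝ≥0∞) : ℝ≥0∞ :=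
  essSup (fun x => ∫⁻ y in x • GS.V, f y ∂GS.μ) GS.μ

/-- The characteristic function of `V`, with values in `ℝ≥0∞`. -/
def chiV (GS : GroupSetting G) : G → ℝ≥0∞ := GS.V.indicator 1

/-- The norm of the left weak amalgam space `W^weak(L^∞,L¹_w)`: `‖χ_V * f‖_{W(L^∞,L¹_w)}`. -/
def Wweak_Linf_L1w (GS : GroupSetting G) (w : G → ℝ) (f : G → ℝ≥0∞) : ℝ≥0∞ :=
  W_Linf_L1w GS w (convE GS (chiV GS) f)

/-- The norm of the right weak amalgam space `W_R^weak(L^∞,L¹_w)`: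
`‖f * χ_V‖_{W_R(L^∞,L¹_w)}`. -/
def WRweak_Linf_L1w (GS : GroupSetting G) (w : G → ℝ) (f : G → ℝ≥0∞) : ℝ≥0∞ :=
  WR_Linf_L1w GS w (convE GS f (chiV GS))

/-- The norm of the strong amalgam space `W^st(L^∞,L¹_w) = W_R(L^∞, W(L^∞,L¹_w))`:
`‖(f_#)^#‖_{L¹_w}`. -/
def Wst_Linf_L1w (GS : GroupSetting G) (w : G → ℝ) (f : G → ℝ≥0∞) : ℝ≥0∞ :=
  L1wNorm GS w (sharpL GS (sharpR GS f))

/-- A solid BF space on `G`, modelled by its (solid) function norm `N` acting on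
extended-nonnegative functions. The norm of a complex function `f` is `N (enn f)`.
The fields record: solidity (monotonicity), the norm axioms, nondegeneracy,
the continuous embedding into `L¹_loc`, and completeness (Banach). -/
structure BFSpace (GS : GroupSetting G) where
  N : (G → ℝ≥0∞) → ℝ≥0∞
  mono : ∀ f g : G → ℝ≥0∞, (∀ᵐ x ∂GS.μ, f x ≤ g x) → N f ≤ N g
  add_le : ∀ f g : G → ℝ≥0∞, N (fun x => f x + g x) ≤ N f + N g
  smul_eq : ∀ (c : ℝ≥0∞) (f : G → ℝ≥0∞), N (fun x => c * f x) = c * N f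
  eq_zero : ∀ f : G → ℝ≥0∞, Measurable f → N f = 0 → f =ᵐ[GS.μ] 0
  loc_embed : ∀ K : Set G, IsCompact K → ∃ C : ℝ≥0∞, C ≠ ⊤ ∧
      ∀ f : G → ℝ≥0∞, Measurable f → (∫⁻ x in K, f x ∂GS.μ) ≤ C * N f
  complete : ∀ u : ℕ → G → ℂ, (∀ n, AEStronglyMeasurable (u n) GS.μ) →
      (∀ n, N (enn (u n)) ≠ ⊤) →
      (∀ ε : ℝ≥0∞, 0 < ε → ∃ n₀ : ℕ, ∀ m ≥ n₀, ∀ n ≥ n₀,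
          N (enn (fun x => u m x - u n x)) < ε) →
      ∃ f : G → ℂ, AEStronglyMeasurable f GS.μ ∧ N (enn f) ≠ ⊤ ∧
        Tendsto (fun n => N (enn (fun x => u n x - f x))) atTop (nhds 0)

/-- Membership in a BF space. -/
def BFSpace.Mem {GS : GroupSetting G} (E : BFSpace GS) (f : G → ℂ) : Prop :=
  AEStronglyMeasurable f GS.μ ∧ E.N (enn f) ≠ ⊤

/-- The norm of the amalgam space `W(L^∞, E)`, namely `‖f^#‖_E`. -/
def W_Linf_E (GS : GroupSetting G) (E : BFSpace GS) (f : G → ℝ≥0∞) : ℝ≥0∞ :=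
  E.N (sharpL GS f)

/-- A BF space is translation invariant when left and right translations act boundedly
on it. -/
structure IsTI (GS : GroupSetting G) (E : BFSpace GS) : Prop where
  left : ∀ x : G, ∃ C : ℝ≥0∞, C ≠ ⊤ ∧ ∀ f, E.N (fun y => f (x⁻¹ * y)) ≤ C * E.N f
  right : ∀ x : G, ∃ C : ℝ≥0∞, C ≠ ⊤ ∧ ∀ f, E.N (fun y => f (y * x)) ≤ C * E.N f

/-- An admissible weight on `G`: locally bounded, positive, `w(x) = Δ(x⁻¹) w(x⁻¹)`
and submultiplicative. -/
structure IsAdmissibleWeight (GS : GroupSetting G) (w : G → ℝ) : Prop where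
  pos : ∀ x, 0 < w x
  locBdd : ∀ K : Set G, IsCompact K → ∃ M : ℝ, ∀ x ∈ K, w x ≤ M
  delta_rel : ∀ x, w x = GS.Δ x⁻¹ * w x⁻¹
  submul : ∀ x y, w (x * y) ≤ w x * w y

/-- `w` is an admissible weight for the solid translation invariant BF space `E`, with
admissibility constant `C`: the weight dominates (with constant `C`) the operator norms
of left and right translations, and `E` is an `L¹_w`-convolution module on both sides. -/
structure IsAdmissibleFor (GS : GroupSetting G) (w : G → ℝ) (E : BFSpace GS) (C : ℝ) :
    Prop where
  adm : IsAdmissibleWeight GS w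
  C_pos : 0 < C
  transL : ∀ (x : G) (f : G → ℝ≥0∞),
      E.N (fun y => f (x⁻¹ * y)) ≤ ENNReal.ofReal (w x / C) * E.N f
  transL' : ∀ (x : G) (f : G → ℝ≥0∞),
      E.N (fun y => f (x * y)) ≤ ENNReal.ofReal (w x / C) * E.N f
  transR : ∀ (x : G) (f : G → ℝ≥0∞),
      E.N (fun y => f (y * x)) ≤ ENNReal.ofReal (w x / C) * E.N f
  transR' : ∀ (x : G) (f : G → ℝ≥0∞),
      E.N (fun y => f (y * x⁻¹)) ≤ ENNReal.ofReal (GS.Δ x * (w x / C)) * E.N f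
  convL : ∀ g f : G → ℝ≥0∞,
      E.N (convE GS g f) ≤ ENNReal.ofReal (1 / C) * L1wNorm GS w g * E.N f
  convR : ∀ f g : G → ℝ≥0∞,
      E.N (convE GS f g) ≤ ENNReal.ofReal (1 / C) * E.N f * L1wNorm GS w g

/-- `Λ` is relatively separated with spreadness (at most) `n`:
every left translate of `V` contains at most `n` points of `Λ`. -/
def RelSep (GS : GroupSetting G) (Λ : Set G) (n : ℕ) : Prop :=
  ∀ x : G, (Λ ∩ x • GS.V).encard ≤ (n : ℕ∞)

/-- The norm of the discrete space `E_d(Λ)`: `‖Σ_λ |c_λ| χ_{λV}‖_E`. -/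
def EdNorm (GS : GroupSetting G) (E : BFSpace GS) (Λ : Set G) (c : Λ → ℂ) : ℝ≥0∞ :=
  E.N (fun x => ∑' l : Λ, ((l : G) • GS.V).indicator (fun _ => (‖c l‖₊ : ℝ≥0∞)) x)

/-- The norm of the `B`-valued discrete space `E_{d,B}(Λ)`:
`‖Σ_λ ‖c_λ‖_B χ_{λV}‖_E`. -/
def EdBNorm (GS : GroupSetting G) (E B : BFSpace GS) (Λ : Set G) (c : Λ → G → ℂ) : ℝ≥0∞ :=
  E.N (fun x => ∑' l : Λ, ((l : G) • GS.V).indicator (fun _ => B.N (enn (c l))) x)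

end CoorbitCovers

section TopologicalGroup

variable {G : Type*} [Group G] [TopologicalSpace G] [IsTopologicalGroup G]

theorem exists_isOpen_one_mem_inv_mul_subset {V : Set G} (hV : V ∈ nhds (1 : G)) :
    ∃ U : Set G, IsOpen U ∧ (1 : G) ∈ U ∧ U⁻¹ * U ⊆ V := by
  obtain ⟨W, hW, hWV⟩ := exists_nhds_split_inv hV
  refine ⟨(interior W)⁻¹, isOpen_interior.inv, by simpa [mem_interior_iff_mem_nhds], ?_⟩
  rintro _ ⟨a, ha, b, hb, rfl⟩
  simpa using hWV a (interior_subset (by simpa using ha)) b⁻¹ (interior_subset hb)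

theorem exists_countable_iUnion_smul_eq_univ [SigmaCompactSpace G] {U : Set G} (hU : IsOpen U)
    (h1 : (1 : G) ∈ U) : ∃ s : Set G, s.Countable ∧ ⋃ z ∈ s, z • U = univ :=
  countable_cover_nhds_of_sigmaCompact fun x =>
    (hU.smul x).mem_nhds (by simpa using smul_mem_smul_set (a := x) h1)

end TopologicalGroup

section LeftInvariantMeasure

variable {G : Type*} [Group G] [MeasurableSpace G] [MeasurableMul G] {μ : Measure G}
  [μ.IsMulLeftInvariant]

theorem restrict_smul_set_eq_map (V : Set G) (y : G) :
    μ.restrict (y • V) = (μ.restrict V).map (y * ·) := by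
  have hpre : (y * ·) ⁻¹' (y • V) = V := by
    ext x; simp [mem_smul_set_iff_inv_smul_mem]
  calc μ.restrict (y • V) = (μ.map (y * ·)).restrict (y • V) := by rw [map_mul_left_eq_self]
    _ = (μ.restrict V).map (y * ·) := by
      rw [(measurableEmbedding_mulLeft y).restrict_map, hpre]

theorem essSup_restrict_smul_set (ψ : G → ℝ≥0∞) (V : Set G) (y : G) :
    essSup ψ (μ.restrict (y • V)) = essSup (fun v => ψ (y * v)) (μ.restrict V) := by
  rw [restrict_smul_set_eq_map, (measurableEmbedding_mulLeft y).essSup_map_measure]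
  rfl

theorem measure_mul_lintegral_le_lintegral_setLIntegral_smul [SFinite μ] {U V s : Set G}
    (hU : MeasurableSet U) (hUV : U⁻¹ * U ⊆ V) (hs : s.Countable)
    (hcover : ⋃ z ∈ s, z • U = univ) {F : G → ℝ≥0∞} (hF : AEMeasurable F μ) :
    μ U * ∫⁻ x, F x ∂μ ≤ ∫⁻ y, ∫⁻ x in y • V, F x ∂μ ∂μ := by
  set S := ⋃ z ∈ s, (z • U) ×ˢ (z • U)
  have hS : MeasurableSet S := .biUnion hs fun z _ => (hU.const_smul z).prod (hU.const_smul z)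
  set K : G × G → ℝ≥0∞ := S.indicator 1
  have hK : Measurable K := measurable_one.indicator hS
  have hfiber (x : G) : μ U ≤ ∫⁻ y, K (y, x) ∂μ := by
    obtain ⟨z, hz, hx⟩ := mem_iUnion₂.1 (hcover.ge (mem_univ x))
    calc μ U = μ (z • U) := (measure_smul μ z U).symm
      _ ≤ μ ((·, x) ⁻¹' S) := measure_mono fun y hy => mem_biUnion hz ⟨hy, hx⟩
      _ = ∫⁻ y, K (y, x) ∂μ := (lintegral_indicator_one (measurable_prodMk_right hS)).symm
  have hsub {y x : G} (h : (y, x) ∈ S) : x ∈ y • V := by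
    obtain ⟨z, -, ⟨a, ha, rfl⟩, ⟨b, hb, rfl⟩⟩ := mem_iUnion₂.1 h
    simpa [smul_eq_mul, mul_assoc] using
      smul_mem_smul_set (a := z * a) (hUV (mul_mem_mul (inv_mem_inv.2 ha) hb))
  calc μ U * ∫⁻ x, F x ∂μ = ∫⁻ x, μ U * F x ∂μ := (lintegral_const_mul'' _ hF).symm
    _ ≤ ∫⁻ x, ∫⁻ y, K (y, x) * F x ∂μ ∂μ := lintegral_mono fun x => by
      have hKx : Measurable fun y => K (y, x) := hK.comp measurable_prodMk_right
      rw [lintegral_mul_const _ hKx]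
      exact mul_le_mul_left (hfiber x) _
    _ = ∫⁻ y, ∫⁻ x, K (y, x) * F x ∂μ ∂μ := lintegral_lintegral_swap
      ((hK.comp measurable_swap).aemeasurable.mul hF.comp_fst)
    _ ≤ ∫⁻ y, ∫⁻ x in y • V, F x ∂μ ∂μ := lintegral_mono fun y => by
      refine le_trans (lintegral_mono fun x => ?_) (lintegral_indicator_le F (y • V))
      by_cases h : (y, x) ∈ S
      · simp [K, h, hsub h]
      · simp [K, h]

end LeftInvariantMeasure

namespace CoorbitCovers

theorem integrable_mul_of_lintegral_enn_mul_ne_top {α : Type*} [MeasurableSpace α]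
    {μ : Measure α} {f g : α → ℂ} (hf : AEStronglyMeasurable f μ) (hg : AEStronglyMeasurable g μ)
    (h : ∫⁻ x, enn f x * enn g x ∂μ ≠ ⊤) : Integrable (fun x => f x * g x) μ :=
  ⟨hf.mul hg, by simp_rw [HasFiniteIntegral, enorm_mul]; exact h.lt_top⟩

section

variable {G : Type*} [Group G] [TopologicalSpace G] [MeasurableSpace G]

theorem sharpL_eq_essSup_restrict_smul [MeasurableMul G] (GS : GroupSetting G)
    (ψ : G → ℝ≥0∞) (y : G) :
    sharpL GS ψ y = essSup ψ (GS.μ.restrict (y • GS.V)) :=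
  have := GS.haar
  (essSup_restrict_smul_set ψ GS.V y).symm

theorem setLIntegral_smul_mul_le_sharpL_mul [MeasurableMul G] (GS : GroupSetting G)
    {φ : G → ℝ≥0∞} (hφ : AEMeasurable φ GS.μ) (ψ : G → ℝ≥0∞) (y : G) :
    ∫⁻ x in y • GS.V, φ x * ψ x ∂GS.μ ≤ sharpL GS ψ y * ∫⁻ x in y • GS.V, φ x ∂GS.μ := by
  rw [← lintegral_const_mul'' _ hφ.restrict, sharpL_eq_essSup_restrict_smul]
  refine lintegral_mono_ae ?_
  filter_upwards [ae_le_essSup ψ] with x hx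
  rw [mul_comm]
  gcongr

theorem exists_lintegral_mul_le_mul_lintegral_sharpL_mul [IsTopologicalGroup G]
    [SigmaCompactSpace G] [BorelSpace G] (GS : GroupSetting G) :
    ∃ C : ℝ≥0∞, C ≠ ⊤ ∧ ∀ {φ ψ : G → ℝ≥0∞} (u : G → ℝ≥0∞) {A : ℝ≥0∞},
      AEMeasurable φ GS.μ → AEMeasurable ψ GS.μ → A ≠ ⊤ →
      (∀ᵐ y ∂GS.μ, ∫⁻ x in y • GS.V, φ x ∂GS.μ ≤ A * u y) →
      ∫⁻ x, φ x * ψ x ∂GS.μ ≤ C * A * ∫⁻ y, sharpL GS ψ y * u y ∂GS.μ := by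
  have := GS.haar
  obtain ⟨U, hUo, hU1, hUV⟩ := exists_isOpen_one_mem_inv_mul_subset GS.V_nhds
  obtain ⟨s, hs, hcover⟩ := exists_countable_iUnion_smul_eq_univ hUo hU1
  have hU0 : GS.μ U ≠ 0 := (hUo.measure_pos GS.μ ⟨1, hU1⟩).ne'
  have hUtop : GS.μ U ≠ ⊤ := by
    have hUV' : U ⊆ closure GS.V := fun u hu =>
      subset_closure (by simpa using hUV (mul_mem_mul (inv_mem_inv.2 hU1) hu))
    exact ((measure_mono hUV').trans_lt GS.V_relCompact.measure_lt_top).ne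
  refine ⟨(GS.μ U)⁻¹, ENNReal.inv_ne_top.2 hU0, ?_⟩
  intro φ ψ u A hφ hψ hA hloc
  rw [mul_assoc, ← ENNReal.mul_le_iff_le_inv hU0 hUtop]
  calc GS.μ U * ∫⁻ x, φ x * ψ x ∂GS.μ
      ≤ ∫⁻ y, ∫⁻ x in y • GS.V, φ x * ψ x ∂GS.μ ∂GS.μ :=
        measure_mul_lintegral_le_lintegral_setLIntegral_smul hUo.measurableSet hUV hs hcover
          (hφ.mul hψ)
    _ ≤ ∫⁻ y, sharpL GS ψ y * (A * u y) ∂GS.μ := by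
        refine lintegral_mono_ae (hloc.mono fun y hy => ?_)
        exact (setLIntegral_smul_mul_le_sharpL_mul GS hφ ψ y).trans (by gcongr)
    _ = A * ∫⁻ y, sharpL GS ψ y * u y ∂GS.μ := by
        simp_rw [mul_left_comm _ A]
        exact lintegral_const_mul' _ _ hA

theorem ae_setLIntegral_smul_le_W_L1_Linfw_mul (GS : GroupSetting G) {w : G → ℝ}
    (hw : ∀ x, 0 < w x) (φ : G → ℝ≥0∞) :
    ∀ᵐ y ∂GS.μ, ∫⁻ x in y • GS.V, φ x ∂GS.μ ≤ W_L1_Linfw GS w φ * ENNReal.ofReal (w y) := by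
  filter_upwards [ae_le_essSup fun y => (∫⁻ x in y • GS.V, φ x ∂GS.μ) / ENNReal.ofReal (w y)]
    with y hy
  exact (ENNReal.div_le_iff (ENNReal.ofReal_pos.2 (hw y)).ne' ENNReal.ofReal_ne_top).1 hy

end

variable {G : Type*} [Group G] [TopologicalSpace G] [IsTopologicalGroup G]
  [LocallyCompactSpace G] [SigmaCompactSpace G] [MeasurableSpace G] [BorelSpace G]

/-- Hölder-type estimate for amalgam spaces:
`W(L¹,L^∞_{1/w}) · W(L^∞,L¹_w) ↪ L¹`, with a constant depending only on `V` and `w`;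
the same holds in the unweighted case `W(L¹,L^∞) · W(L^∞,L¹) ↪ L¹`. -/
theorem statement1 (GS : GroupSetting G) (w : G → ℝ) (hw : IsAdmissibleWeight GS w) :
    ∃ C : ℝ≥0∞, C ≠ ⊤ ∧
      (∀ f g : G → ℂ, AEStronglyMeasurable f GS.μ → AEStronglyMeasurable g GS.μ →
        W_L1_Linfw GS w (enn f) ≠ ⊤ → W_Linf_L1w GS w (enn g) ≠ ⊤ →
        Integrable (fun x => f x * g x) GS.μ ∧
        (∫⁻ x, enn f x * enn g x ∂GS.μ) ≤
          C * W_L1_Linfw GS w (enn f) * W_Linf_L1w GS w (enn g)) ∧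
      (∀ f g : G → ℂ, AEStronglyMeasurable f GS.μ → AEStronglyMeasurable g GS.μ →
        W_L1_Linf GS (enn f) ≠ ⊤ → W_Linf_L1 GS (enn g) ≠ ⊤ →
        Integrable (fun x => f x * g x) GS.μ ∧
        (∫⁻ x, enn f x * enn g x ∂GS.μ) ≤
          C * W_L1_Linf GS (enn f) * W_Linf_L1 GS (enn g)) := by
  obtain ⟨C, hC, hmain⟩ := exists_lintegral_mul_le_mul_lintegral_sharpL_mul GS
  have holder {f g : G → ℂ} (u : G → ℝ≥0∞) {A : ℝ≥0∞} (hf : AEStronglyMeasurable f GS.μ)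
      (hg : AEStronglyMeasurable g GS.μ) (hA : A ≠ ⊤)
      (hB : ∫⁻ y, sharpL GS (enn g) y * u y ∂GS.μ ≠ ⊤)
      (hloc : ∀ᵐ y ∂GS.μ, ∫⁻ x in y • GS.V, enn f x ∂GS.μ ≤ A * u y) :
      Integrable (fun x => f x * g x) GS.μ ∧
        ∫⁻ x, enn f x * enn g x ∂GS.μ ≤ C * A * ∫⁻ y, sharpL GS (enn g) y * u y ∂GS.μ := by
    have h := hmain u hf.enorm hg.enorm hA hloc
    exact ⟨integrable_mul_of_lintegral_enn_mul_ne_top hf hg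
      (ne_top_of_le_ne_top (by finiteness) h), h⟩
  refine ⟨C, hC, fun f g hf hg hfW hgW =>
    holder _ hf hg hfW hgW (ae_setLIntegral_smul_le_W_L1_Linfw_mul GS hw.pos _), ?_⟩
  intro f g hf hg hfW hgW
  simpa [W_Linf_L1] using holder 1 hf hg hfW (by simpa [W_Linf_L1] using hgW)
    ((ae_le_essSup _).mono fun y hy => by simpa [W_L1_Linf] using hy)

end CoorbitCovers
end
end

section
/- Let G be a locally compact, σ-compact group, let E be a solid, translation invariant BF space on G, let w be an admissible weight for E, and let Λ ⊆ G be a relatively separated set. Then for every f ∈ E and every continuous g ∈ W_R(C₀, L¹_w), the sequence (⟨f, L_λ g⟩)_{λ∈Λ} belongs to E_d(Λ) and ‖(⟨f, L_λ g⟩)_λ‖_{E_d} ≤ C ‖f‖_E ‖g‖_{W_R(L^∞,L¹_w)}, where ⟨f,h⟩ = ∫_G f(x) \overline{h(x)} dx and C depends only on ρ(Λ), w and the admissibility constant of w for E. -/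
open MeasureTheory ENNReal Filter Set Pointwise

noncomputable section

namespace CoorbitCovers

variable {G : Type*}

variable [Group G] [TopologicalSpace G] [IsTopologicalGroup G]
  [LocallyCompactSpace G] [SigmaCompactSpace G] [MeasurableSpace G] [BorelSpace G]

/-!
The coefficient satisfies `|⟨f, L_λ g⟩| ≤ (|f| * |g|∨)(λ)`. Cover `V` by finitely many sets
`(int V) ξ`, `ξ ∈ m`; then at every point `x ∈ λV` this is dominated by `(|f| * H)(x)`, where
`H(t) = Σ_ξ Φ(ξ t⁻¹)` and `Φ(z) = sup_{p ∈ int V} |g(p z)| ≤ g_#(z)`. As `Λ` is relatively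
separated, every `x` lies in at most `n` of the sets `λV`, so the `E_d`-norm is at most
`n ‖|f| * H‖_E ≤ n C⁻¹ ‖f‖_E Σ_ξ ‖Φ(ξ ·⁻¹)‖_{L¹_w}`.

Finally `‖Φ(ξ ·⁻¹)‖_{L¹_w} ≤ c w(ξ⁻¹) ‖Φ‖_{L¹_w}`: the relation `w(t) = Δ(t⁻¹) w(t⁻¹)` turns the
left-hand side into an integral against `Δ(s) dμ.inv(s)`, a left invariant measure and therefore a
multiple of `μ` by uniqueness of Haar measure. Its density is measurable because `Δ`, a positive
character bounded on the compact set `closure V`, is continuous.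
-/

attribute [instance] GroupSetting.haar

open scoped NNReal Topology

lemma _root_.MonoidHom.continuous_of_pos_of_le {M : Type*} [Group M] [TopologicalSpace M]
    [IsTopologicalGroup M] (φ : M →* ℝ) (hpos : ∀ x, 0 < φ x) {W : Set M} (hW : W ∈ 𝓝 1)
    {B : ℝ} (hB : ∀ x ∈ W, φ x ≤ B) : Continuous φ := by
  have hB1 : 1 ≤ B := φ.map_one ▸ hB 1 (mem_of_mem_nhds hW)
  -- `log ∘ φ` is additive and bounded near `1`, so `log φ u = log φ (u ^ N) / N` is small.
  have hlog : Tendsto (fun u => Real.log (φ u)) (𝓝 1) (𝓝 0) := by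
    rw [Metric.tendsto_nhds]
    intro ε hε
    obtain ⟨N, hN⟩ := exists_nat_gt (Real.log B / ε)
    have hN0 : (0 : ℝ) < N := (div_nonneg (Real.log_nonneg hB1) hε.le).trans_lt hN
    have hpow : Tendsto (fun u : M => u ^ N) (𝓝 1) (𝓝 1) :=
      (continuous_pow N).tendsto' 1 1 (one_pow N)
    have hpow_inv : Tendsto (fun u : M => (u ^ N)⁻¹) (𝓝 1) (𝓝 1) :=
      (continuous_pow N).inv.tendsto' 1 1 (by simp)
    filter_upwards [hpow hW, hpow_inv hW] with u hu hu'
    have hupper : N * Real.log (φ u) ≤ Real.log B := by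
      rw [← Real.log_pow, ← map_pow]
      exact Real.log_le_log (hpos _) (hB _ hu)
    have hlower : -(N * Real.log (φ u)) ≤ Real.log B := by
      rw [← Real.log_pow, ← map_pow, ← Real.log_inv, ← map_inv]
      exact Real.log_le_log (hpos _) (hB _ hu')
    rw [Real.dist_eq, sub_zero, abs_lt]
    rw [div_lt_iff₀ hε] at hN
    constructor <;> nlinarith
  refine continuous_of_continuousAt_one φ ?_
  rw [ContinuousAt, map_one, ← Real.exp_zero]
  exact ((Real.continuous_exp.tendsto 0).comp hlog).congr fun u => Real.exp_log (hpos u)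

lemma le_essSup_restrict_of_mem_interior {X : Type*} [TopologicalSpace X] [MeasurableSpace X]
    [OpensMeasurableSpace X] (μ : Measure X) [μ.IsOpenPosMeasure] {S : Set X}
    {h : X → ℝ≥0∞} (hh : Continuous h) {p : X} (hp : p ∈ interior S) :
    h p ≤ essSup h (μ.restrict S) := by
  by_contra! hlt
  set c := essSup h (μ.restrict S)
  have hopen : IsOpen {y | c < h y} := isOpen_lt continuous_const hh
  have hnull : μ ({y | c < h y} ∩ S) = 0 := by
    rw [← Measure.restrict_apply hopen.measurableSet]
    exact meas_essSup_lt
  exact (hopen.inter isOpen_interior).measure_ne_zero μ ⟨p, hlt, hp⟩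
    (measure_mono_null (inter_subset_inter_right _ interior_subset) hnull)

lemma continuous_enn {X : Type*} [TopologicalSpace X] {g : X → ℂ} (hg : Continuous g) :
    Continuous (enn g) :=
  ENNReal.continuous_coe.comp (continuous_nnnorm.comp hg)

namespace GroupSetting

variable (GS : GroupSetting G)

section Basic

omit [IsTopologicalGroup G] [LocallyCompactSpace G] [SigmaCompactSpace G] [BorelSpace G]

lemma Δ_one : GS.Δ 1 = 1 :=
  mul_left_cancel₀ (GS.Δ_pos 1).ne' ((GS.Δ_hom 1 1).symm.trans (by rw [mul_one, mul_one]))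

def modularHom : G →* ℝ where
  toFun := GS.Δ
  map_one' := GS.Δ_one
  map_mul' := GS.Δ_hom

lemma ofReal_Δ_mul_ofReal_Δ_inv (x : G) :
    ENNReal.ofReal (GS.Δ x) * ENNReal.ofReal (GS.Δ x⁻¹) = 1 := by
  rw [← ENNReal.ofReal_mul (GS.Δ_pos x).le, ← GS.Δ_hom, mul_inv_cancel, GS.Δ_one,
    ENNReal.ofReal_one]

lemma measure_V_pos : 0 < GS.μ GS.V :=
  (isOpen_interior.measure_pos GS.μ ⟨1, mem_interior_iff_mem_nhds.2 GS.V_nhds⟩).trans_le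
    (measure_mono interior_subset)

lemma measure_V_ne_top : GS.μ GS.V ≠ ⊤ :=
  ((measure_mono subset_closure).trans_lt GS.V_relCompact.measure_lt_top).ne

def invDensity : Measure G := GS.μ.inv.withDensity fun s => ENNReal.ofReal (GS.Δ s)

/-- A lower semicontinuous, hence measurable, minorant of the local maximum function `(enn g)_#`
when `g` is continuous. -/
def localSup (g : G → ℂ) (z : G) : ℝ≥0∞ := ⨆ p ∈ interior GS.V, enn g (p * z)

end Basic

section Topology

omit [LocallyCompactSpace G] [SigmaCompactSpace G] [BorelSpace G]

lemma exists_Δ_le_of_isCompact {K : Set G} (hK : IsCompact K) :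
    ∃ M : ℝ, ∀ x ∈ K, GS.Δ x ≤ M := by
  refine ⟨(GS.μ (closure GS.V * K) / GS.μ GS.V).toReal, fun x hx => ?_⟩
  have hVx : ENNReal.ofReal (GS.Δ x) * GS.μ GS.V ≤ GS.μ (closure GS.V * K) := by
    rw [← GS.Δ_spec x GS.V GS.V_meas]
    refine measure_mono ?_
    rintro - ⟨y, hy, rfl⟩
    exact mul_mem_mul (subset_closure hy) hx
  have hfin : GS.μ (closure GS.V * K) ≠ ⊤ := (GS.V_relCompact.mul hK).measure_lt_top.ne
  rw [← ENNReal.ofReal_le_iff_le_toReal (ENNReal.div_lt_top hfin GS.measure_V_pos.ne').ne]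
  exact (ENNReal.le_div_iff_mul_le (Or.inl GS.measure_V_pos.ne')
    (Or.inl GS.measure_V_ne_top)).2 hVx

lemma continuous_Δ : Continuous GS.Δ := by
  obtain ⟨M, hM⟩ := GS.exists_Δ_le_of_isCompact GS.V_relCompact
  exact GS.modularHom.continuous_of_pos_of_le GS.Δ_pos GS.V_nhds
    fun x hx => hM x (subset_closure hx)

lemma exists_finset_mul_inv_mem_interior :
    ∃ m : Finset G, ∀ u ∈ GS.V, ∃ ξ ∈ m, u * ξ⁻¹ ∈ interior GS.V := by
  have hcover : closure GS.V ⊆ ⋃ ξ : G, (· * ξ⁻¹) ⁻¹' interior GS.V := fun u _ =>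
    mem_iUnion.2 ⟨u, by simpa using mem_interior_iff_mem_nhds.2 GS.V_nhds⟩
  obtain ⟨m, hm⟩ := GS.V_relCompact.elim_finite_subcover _
    (fun ξ => isOpen_interior.preimage (continuous_mul_const ξ⁻¹)) hcover
  exact ⟨m, fun u hu => by simpa using hm (subset_closure hu)⟩

end Topology

section Measure

omit [LocallyCompactSpace G] [SigmaCompactSpace G]

lemma map_mul_right (x : G) :
    Measure.map (· * x) GS.μ = ENNReal.ofReal (GS.Δ x⁻¹) • GS.μ := by
  ext A hA
  rw [Measure.map_apply (measurable_mul_const x) hA, Measure.smul_apply, smul_eq_mul,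
    ← GS.Δ_spec x⁻¹ A hA]
  congr 1
  ext y
  simp

lemma lintegral_comp_mul_right (x : G) (F : G → ℝ≥0∞) :
    ∫⁻ y, F (y * x) ∂GS.μ = ENNReal.ofReal (GS.Δ x⁻¹) * ∫⁻ y, F y ∂GS.μ := by
  rw [← smul_eq_mul, ← lintegral_smul_measure, ← map_mul_right]
  exact (lintegral_map_equiv F (MeasurableEquiv.mulRight x)).symm

lemma lintegral_invDensity (F : G → ℝ≥0∞) :
    ∫⁻ s, F s ∂GS.invDensity = ∫⁻ t, ENNReal.ofReal (GS.Δ t⁻¹) * F t⁻¹ ∂GS.μ := by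
  rw [invDensity, lintegral_withDensity_eq_lintegral_mul_non_measurable _
    GS.continuous_Δ.measurable.ennreal_ofReal (ae_of_all _ fun _ => ENNReal.ofReal_lt_top)]
  exact lintegral_map_equiv _ (MeasurableEquiv.inv G)

instance : GS.invDensity.IsMulLeftInvariant := by
  refine ⟨fun g => Measure.ext fun A hA => ?_⟩
  have hpt : ∀ t : G, ENNReal.ofReal (GS.Δ t⁻¹) * ((g * ·) ⁻¹' A).indicator 1 t⁻¹
      = ENNReal.ofReal (GS.Δ g⁻¹) *
        (ENNReal.ofReal (GS.Δ (t * g⁻¹)⁻¹) * A.indicator 1 (t * g⁻¹)⁻¹) := by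
    intro t
    simp only [mul_inv_rev, inv_inv, GS.Δ_hom, ENNReal.ofReal_mul (GS.Δ_pos _).le]
    rw [← mul_assoc, ← mul_assoc, mul_comm (ENNReal.ofReal (GS.Δ g⁻¹)),
      GS.ofReal_Δ_mul_ofReal_Δ_inv, one_mul]
    rfl
  have htranslate := GS.lintegral_comp_mul_right g⁻¹
    fun t => ENNReal.ofReal (GS.Δ t⁻¹) * A.indicator 1 t⁻¹
  rw [inv_inv] at htranslate
  rw [Measure.map_apply (measurable_const_mul g) hA, ← lintegral_indicator_one hA,
    ← lintegral_indicator_one (measurable_const_mul g hA), lintegral_invDensity,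
    lintegral_invDensity, lintegral_congr hpt, lintegral_const_mul' _ _ ENNReal.ofReal_ne_top,
    htranslate, ← mul_assoc, mul_comm (ENNReal.ofReal (GS.Δ g⁻¹)),
    GS.ofReal_Δ_mul_ofReal_Δ_inv, one_mul]

instance : IsFiniteMeasureOnCompacts GS.invDensity := by
  refine ⟨fun K hK => ?_⟩
  obtain ⟨M, hM⟩ := GS.exists_Δ_le_of_isCompact hK.closure
  calc GS.invDensity K ≤ GS.invDensity (closure K) := measure_mono subset_closure
    _ = ∫⁻ s in closure K, ENNReal.ofReal (GS.Δ s) ∂GS.μ.inv :=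
        withDensity_apply _ isClosed_closure.measurableSet
    _ ≤ ∫⁻ _ in closure K, ENNReal.ofReal M ∂GS.μ.inv :=
        setLIntegral_mono measurable_const fun s hs => ENNReal.ofReal_le_ofReal (hM s hs)
    _ = ENNReal.ofReal M * GS.μ.inv (closure K) := by rw [setLIntegral_const, mul_comm]
    _ < ⊤ := by
        rw [Measure.inv_apply]
        exact ENNReal.mul_lt_top ENNReal.ofReal_lt_top hK.closure.inv.measure_lt_top

variable {GS}

lemma L1wNorm_comp_mul_inv_le {w : G → ℝ} (hw : IsAdmissibleWeight GS w) {c : ℝ≥0∞}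
    (hc : ∀ F : G → ℝ≥0∞,
      ∫⁻ t, ENNReal.ofReal (GS.Δ t⁻¹) * F t⁻¹ ∂GS.μ ≤ c * ∫⁻ t, F t ∂GS.μ)
    (Φ : G → ℝ≥0∞) (ξ : G) :
    L1wNorm GS w (fun t => Φ (ξ * t⁻¹)) ≤ c * ENNReal.ofReal (w ξ⁻¹) * L1wNorm GS w Φ := by
  set F : G → ℝ≥0∞ := fun u => Φ (ξ * u) * ENNReal.ofReal (w u)
  have hinv : ∀ t, Φ (ξ * t⁻¹) * ENNReal.ofReal (w t) = ENNReal.ofReal (GS.Δ t⁻¹) * F t⁻¹ := by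
    intro t
    rw [hw.delta_rel t, ENNReal.ofReal_mul (GS.Δ_pos _).le]
    ring
  have hsubmul : ∀ u, F u ≤ ENNReal.ofReal (w ξ⁻¹) * (Φ (ξ * u) * ENNReal.ofReal (w (ξ * u))) := by
    intro u
    calc F u = Φ (ξ * u) * ENNReal.ofReal (w (ξ⁻¹ * (ξ * u))) := by rw [inv_mul_cancel_left]
      _ ≤ Φ (ξ * u) * (ENNReal.ofReal (w ξ⁻¹) * ENNReal.ofReal (w (ξ * u))) := by
          rw [← ENNReal.ofReal_mul (hw.pos _).le]
          gcongr
          exact hw.submul _ _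
      _ = _ := by ring
  calc L1wNorm GS w (fun t => Φ (ξ * t⁻¹))
      = ∫⁻ t, ENNReal.ofReal (GS.Δ t⁻¹) * F t⁻¹ ∂GS.μ := lintegral_congr hinv
    _ ≤ c * ∫⁻ u, F u ∂GS.μ := hc F
    _ ≤ c * ∫⁻ u, ENNReal.ofReal (w ξ⁻¹) * (Φ (ξ * u) * ENNReal.ofReal (w (ξ * u))) ∂GS.μ := by
        gcongr with u
        exact hsubmul u
    _ = c * ENNReal.ofReal (w ξ⁻¹) * L1wNorm GS w Φ := by
        rw [lintegral_const_mul' _ _ ENNReal.ofReal_ne_top, mul_assoc,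
          lintegral_mul_left_eq_self (fun v => Φ v * ENNReal.ofReal (w v)) ξ]
        rfl

lemma measurable_localSup {g : G → ℂ} (hg : Continuous g) : Measurable (GS.localSup g) :=
  (lowerSemicontinuous_biSup fun p _ =>
    ((continuous_enn hg).comp (continuous_const_mul p)).lowerSemicontinuous).measurable

lemma localSup_le_sharpR {g : G → ℂ} (hg : Continuous g) (z : G) :
    GS.localSup g z ≤ sharpR GS (enn g) z :=
  iSup₂_le fun _ hp =>
    le_essSup_restrict_of_mem_interior GS.μ ((continuous_enn hg).comp (continuous_mul_const z)) hp

end Measure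

lemma invDensity_le_smul :
    GS.invDensity ≤ Measure.haarScalarFactor GS.invDensity GS.μ • GS.μ := by
  refine Measure.le_iff.2 fun A _ => ?_
  set S : ℕ → Set G := fun k => A ∩ closure (compactCovering G k)
  have hS : Monotone S := fun a b hab =>
    inter_subset_inter_right _ (closure_mono (compactCovering_subset G hab))
  have hA : A = ⋃ k, S k := by
    rw [← inter_iUnion, iUnion_closure_compactCovering, inter_univ]
  calc GS.invDensity A = ⨆ k, GS.invDensity (S k) := by
        conv_lhs => rw [hA]
        exact hS.measure_iUnion
    _ ≤ _ := iSup_le fun k => by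
        rw [Measure.measure_isMulInvariant_eq_smul_of_isCompact_closure GS.invDensity GS.μ
          ((isCompact_compactCovering G k).closure.closure_of_subset inter_subset_right)]
        exact measure_mono inter_subset_left

lemma exists_lintegral_comp_inv_le : ∃ c : ℝ≥0, ∀ F : G → ℝ≥0∞,
    ∫⁻ t, ENNReal.ofReal (GS.Δ t⁻¹) * F t⁻¹ ∂GS.μ ≤ c * ∫⁻ t, F t ∂GS.μ := by
  refine ⟨Measure.haarScalarFactor GS.invDensity GS.μ, fun F => ?_⟩
  rw [← lintegral_invDensity, ← smul_eq_mul, ← lintegral_smul_measure]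
  exact lintegral_mono' GS.invDensity_le_smul le_rfl

end GroupSetting

section Pointwise

omit [IsTopologicalGroup G] [LocallyCompactSpace G] [SigmaCompactSpace G] [BorelSpace G]

variable {GS : GroupSetting G}

lemma tsum_indicator_le_of_relSep {Λ : Set G} {n : ℕ} (hΛ : RelSep GS Λ n) (c : Λ → ℝ≥0∞)
    {x : G} {T : ℝ≥0∞} (hc : ∀ l : Λ, x ∈ (l : G) • GS.V → c l ≤ T) :
    ∑' l : Λ, ((l : G) • GS.V).indicator (fun _ => c l) x ≤ n * T := by
  set S : Set Λ := Subtype.val ⁻¹' (x • GS.V)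
  -- `V = V⁻¹`, so `x ∈ λV` iff `λ ∈ xV`: only the points of `Λ ∩ xV` contribute.
  have hterm : ∀ l : Λ,
      ((l : G) • GS.V).indicator (fun _ => c l) x ≤ S.indicator (fun _ => T) l := by
    intro l
    by_cases hx : x ∈ (l : G) • GS.V
    · have hl : (l : G) ∈ x • GS.V := by
        obtain ⟨v, hv, rfl⟩ := hx
        exact ⟨v⁻¹, by rw [← GS.V_symm]; exact inv_mem_inv.2 hv, by simp [smul_eq_mul]⟩
      rw [indicator_of_mem hx, indicator_of_mem (show l ∈ S from hl)]
      exact hc l hx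
    · rw [indicator_of_notMem hx]
      exact zero_le
  have hcard : S.encard ≤ n := by
    rw [← Subtype.val_injective.encard_image, Subtype.image_preimage_coe]
    exact hΛ x
  calc ∑' l : Λ, ((l : G) • GS.V).indicator (fun _ => c l) x
      ≤ ∑' l : Λ, S.indicator (fun _ => T) l := ENNReal.tsum_le_tsum hterm
    _ = S.encard * T := by rw [← tsum_subtype, ENNReal.tsum_set_const]
    _ ≤ n * T := by gcongr; exact_mod_cast hcard

lemma EdNorm_le_of_forall_mem_smul (E : BFSpace GS) {Λ : Set G} {n : ℕ} (hΛ : RelSep GS Λ n)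
    (c : Λ → ℂ) (T : G → ℝ≥0∞)
    (hc : ∀ (l : Λ) (x : G), x ∈ (l : G) • GS.V → (‖c l‖₊ : ℝ≥0∞) ≤ T x) :
    EdNorm GS E Λ c ≤ n * E.N T :=
  (E.mono _ _ (ae_of_all _ fun x => tsum_indicator_le_of_relSep hΛ _ (hc · x))).trans_eq
    (E.smul_eq _ T)

lemma BFSpace.N_finset_sum_le (E : BFSpace GS) {ι : Type*} (s : Finset ι) (F : ι → G → ℝ≥0∞) :
    E.N (fun x => ∑ i ∈ s, F i x) ≤ ∑ i ∈ s, E.N (F i) := by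
  classical
  induction s using Finset.induction with
  | empty => simpa using (E.smul_eq 0 0).le
  | insert a s ha ih =>
      simp only [Finset.sum_insert ha]
      exact (E.add_le _ _).trans (add_le_add le_rfl ih)

lemma enorm_pairing_le (f g : G → ℂ) (l : G) :
    (‖pairing GS f (fun y => g (l⁻¹ * y))‖₊ : ℝ≥0∞)
      ≤ ∫⁻ y, enn f y * enn g (l⁻¹ * y) ∂GS.μ := by
  refine (enorm_integral_le_lintegral_enorm _).trans_eq (lintegral_congr fun y => ?_)
  simp [enn, enorm_eq_nnnorm]

lemma enn_le_sum_localSup {m : Finset G} (hm : ∀ u ∈ GS.V, ∃ ξ ∈ m, u * ξ⁻¹ ∈ interior GS.V)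
    (g : G → ℂ) {l x : G} (hx : x ∈ l • GS.V) (y : G) :
    enn g (l⁻¹ * y) ≤ ∑ ξ ∈ m, GS.localSup g (ξ * (y⁻¹ * x)⁻¹) := by
  obtain ⟨v, hv, rfl⟩ := hx
  obtain ⟨ξ, hξ, hvξ⟩ := hm v hv
  have hfactor : l⁻¹ * y = v * ξ⁻¹ * (ξ * (y⁻¹ * (l • v))⁻¹) := by
    simp only [smul_eq_mul]
    group
  calc enn g (l⁻¹ * y) ≤ GS.localSup g (ξ * (y⁻¹ * (l • v))⁻¹) := by
        rw [hfactor]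
        exact le_iSup₂ (f := fun p _ => enn g (p * (ξ * (y⁻¹ * (l • v))⁻¹))) _ hvξ
    _ ≤ _ := Finset.single_le_sum (f := fun ξ => GS.localSup g (ξ * (y⁻¹ * (l • v))⁻¹))
        (fun _ _ => zero_le) hξ

lemma enorm_pairing_le_convE {m : Finset G}
    (hm : ∀ u ∈ GS.V, ∃ ξ ∈ m, u * ξ⁻¹ ∈ interior GS.V) (f g : G → ℂ) {l x : G}
    (hx : x ∈ l • GS.V) :
    (‖pairing GS f (fun y => g (l⁻¹ * y))‖₊ : ℝ≥0∞)
      ≤ convE GS (enn f) (fun t => ∑ ξ ∈ m, GS.localSup g (ξ * t⁻¹)) x :=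
  (enorm_pairing_le f g l).trans <| lintegral_mono fun y => by
    gcongr
    exact enn_le_sum_localSup hm g hx y

end Pointwise

section Convolution

omit [LocallyCompactSpace G] [SigmaCompactSpace G]

variable {GS : GroupSetting G}

lemma N_convE_finset_sum_le {w : G → ℝ} {C : ℝ} {E : BFSpace GS} (hE : IsAdmissibleFor GS w E C)
    {F : G → ℝ≥0∞} (hF : AEMeasurable F GS.μ) {ι : Type*} (s : Finset ι)
    {K : ι → G → ℝ≥0∞} (hK : ∀ i, Measurable (K i)) :
    E.N (convE GS F fun t => ∑ i ∈ s, K i t)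
      ≤ ∑ i ∈ s, ENNReal.ofReal (1 / C) * E.N F * L1wNorm GS w (K i) := by
  have hsplit : convE GS F (fun t => ∑ i ∈ s, K i t) = fun x => ∑ i ∈ s, convE GS F (K i) x := by
    funext x
    simp only [convE, Finset.mul_sum]
    exact lintegral_finsetSum' s fun i _ =>
      hF.mul ((hK i).comp (measurable_inv.mul_const x)).aemeasurable
  rw [hsplit]
  exact (E.N_finset_sum_le s _).trans (Finset.sum_le_sum fun i _ => hE.convR F (K i))

end Convolution

theorem statement4_general (GS : GroupSetting G) (w : G → ℝ) (Cadm : ℝ) (n : ℕ)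
    (hw : IsAdmissibleWeight GS w) :
    ∃ C : ℝ≥0∞, C ≠ ⊤ ∧
      ∀ E : BFSpace GS, IsTI GS E → IsAdmissibleFor GS w E Cadm →
        ∀ Λ : Set G, RelSep GS Λ n →
          ∀ f g : G → ℂ, E.Mem f → Continuous g → WR_Linf_L1w GS w (enn g) ≠ ⊤ →
            EdNorm GS E Λ (fun l => pairing GS f (fun y => g ((l : G)⁻¹ * y))) ≤
              C * E.N (enn f) * WR_Linf_L1w GS w (enn g) := by
  obtain ⟨m, hm⟩ := GS.exists_finset_mul_inv_mem_interior
  obtain ⟨c, hc⟩ := GS.exists_lintegral_comp_inv_le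
  refine ⟨n * ENNReal.ofReal (1 / Cadm) * c * ∑ ξ ∈ m, ENNReal.ofReal (w ξ⁻¹),
    by simp [ENNReal.mul_eq_top, ENNReal.sum_eq_top], ?_⟩
  intro E _ hE Λ hΛ f g hf hg _
  set WR := WR_Linf_L1w GS w (enn g)
  have hlocal : ∀ ξ, L1wNorm GS w (fun t => GS.localSup g (ξ * t⁻¹))
      ≤ c * ENNReal.ofReal (w ξ⁻¹) * WR := fun ξ =>
    (GroupSetting.L1wNorm_comp_mul_inv_le hw hc _ ξ).trans <| by
      gcongr
      exact lintegral_mono fun s => by gcongr; exact GroupSetting.localSup_le_sharpR hg s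
  calc EdNorm GS E Λ (fun l => pairing GS f (fun y => g ((l : G)⁻¹ * y)))
      ≤ n * E.N (convE GS (enn f) fun t => ∑ ξ ∈ m, GS.localSup g (ξ * t⁻¹)) :=
        EdNorm_le_of_forall_mem_smul E hΛ _ _ fun l _ hx => enorm_pairing_le_convE hm f g hx
    _ ≤ n * ∑ ξ ∈ m, ENNReal.ofReal (1 / Cadm) * E.N (enn f) *
          L1wNorm GS w (fun t => GS.localSup g (ξ * t⁻¹)) := by
        gcongr
        exact N_convE_finset_sum_le hE hf.1.enorm m
          fun ξ => (GroupSetting.measurable_localSup hg).comp (measurable_inv.const_mul ξ)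
    _ ≤ n * ∑ ξ ∈ m, ENNReal.ofReal (1 / Cadm) * E.N (enn f) *
          (c * ENNReal.ofReal (w ξ⁻¹) * WR) := by
        gcongr with ξ
        exact hlocal ξ
    _ = _ := by
        rw [Finset.mul_sum, Finset.mul_sum, Finset.sum_mul, Finset.sum_mul]
        exact Finset.sum_congr rfl fun _ _ => by ring

/-- For `f ∈ E` and continuous `g ∈ W_R(C₀,L¹_w)`, the sequence
`(⟨f, L_λ g⟩)_{λ∈Λ}` lies in `E_d(Λ)` with norm at most `C ‖f‖_E ‖g‖_{W_R(L^∞,L¹_w)}`,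
the constant depending only on the spreadness `n` of `Λ`, on `w` and on the
admissibility constant `Cadm`. -/
theorem statement4 (GS : GroupSetting G) (w : G → ℝ) (Cadm : ℝ) (n : ℕ)
    (hw : IsAdmissibleWeight GS w) (hCadm : 0 < Cadm) :
    ∃ C : ℝ≥0∞, C ≠ ⊤ ∧
      ∀ E : BFSpace GS, IsTI GS E → IsAdmissibleFor GS w E Cadm →
        ∀ Λ : Set G, RelSep GS Λ n →
          ∀ f g : G → ℂ, E.Mem f → Continuous g → WR_Linf_L1w GS w (enn g) ≠ ⊤ →
            EdNorm GS E Λ (fun l => pairing GS f (fun y => g ((l : G)⁻¹ * y))) ≤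
              C * E.N (enn f) * WR_Linf_L1w GS w (enn g) :=
  statement4_general GS w Cadm n hw

end CoorbitCovers
end
end
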